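/- arXiv:2509.08397 — 15 statements merged into one kernel-verified Lean document; each statement's English description precedes it below -/
import Mathlib

section
/- A proper submodule N of an R-module M is a semi n-submodule if and only if for all r ∈ R, m ∈ M, and positive integers k, whenever r^k m ∈ N, r is not nilpotent, and Ann_R(m) = 0, then rm ∈ N. -/
/-- A proper submodule `N` of an `R`-module `M` is a *semi `n`-submodule* if whenever
`r ∈ R`, `m ∈ M` with `r ^ 2 • m ∈ N`, `r` not nilpotent and `Ann_R(m) = 0`, then `r • m ∈ N`. -/
def IsSemiNSubmodule (R M : Type*) [CommRing R] [AddCommGroup M] [Module R M]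
    (N : Submodule R M) : Prop :=
  N ≠ ⊤ ∧ ∀ (r : R) (m : M), r ^ 2 • m ∈ N → ¬ IsNilpotent r →
    (∀ s : R, s • m = 0 → s = 0) → r • m ∈ N

theorem semiN_iff_pow (R M : Type*) [CommRing R] [AddCommGroup M] [Module R M]
    (N : Submodule R M) (hN : N ≠ ⊤) :
    IsSemiNSubmodule R M N ↔
      ∀ (r : R) (m : M) (k : ℕ), 0 < k → r ^ k • m ∈ N → ¬ IsNilpotent r →
        (∀ s : R, s • m = 0 → s = 0) → r • m ∈ N := by
  constructor
  · rintro ⟨-, h⟩ r m k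
    induction k using Nat.strong_induction_on with
    | _ k ih =>
      intro hk hmem hnil hann
      rcases Nat.lt_or_ge k 2 with h1 | h2
      · have : k = 1 := by omega
        subst this; simpa using hmem
      · set j := (k + 1) / 2 with hj
        have hj1 : 0 < j := by omega
        have hjk : j < k := by omega
        have h2j : k ≤ 2 * j := by omega
        have hkey : 2 * j - k + k = 2 * j := by omega
        have heq : r ^ (2 * j - k) * r ^ k = r ^ (2 * j) := by
          rw [← pow_add, hkey]
        have hmem2 : r ^ (2 * j) • m ∈ N := by
          rw [← heq, mul_smul]
          exact N.smul_mem _ hmem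
        have hjn : ¬ IsNilpotent (r ^ j) := fun ⟨n, hn⟩ =>
          hnil ⟨j * n, by rw [pow_mul]; exact hn⟩
        have hstep : r ^ j • m ∈ N := by
          apply h (r ^ j) m _ hjn hann
          rwa [← pow_mul, mul_comm]
        exact ih j hjk hj1 hstep hnil hann
  · intro h
    exact ⟨hN, fun r m hm => h r m 2 (by norm_num) hm⟩
end

section
/- A proper submodule N of an R-module M is a semi n-submodule if and only if for every m ∈ M with Ann_R(m) = 0, we have √(N :_R m) = √0 ∪ (N :_R m), where (N :_R m) = {r ∈ R : rm ∈ N}. -/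
/-- The ideal `(N :_R m) = {r : R | r • m ∈ N}`. -/
def colonElem (R M : Type*) [CommRing R] [AddCommGroup M] [Module R M]
    (N : Submodule R M) (m : M) : Ideal R :=
  Submodule.comap (LinearMap.toSpanSingleton R M m) N

lemma mem_colonElem {R M : Type*} [CommRing R] [AddCommGroup M] [Module R M]
    (N : Submodule R M) (m : M) (r : R) :
    r ∈ colonElem R M N m ↔ r • m ∈ N := by
  simp [colonElem, LinearMap.toSpanSingleton_apply]

lemma semiN_descend {R M : Type*} [CommRing R] [AddCommGroup M] [Module R M]
    {N : Submodule R M}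
    (h : ∀ (r : R) (m : M), r ^ 2 • m ∈ N → ¬ IsNilpotent r →
      (∀ s : R, s • m = 0 → s = 0) → r • m ∈ N)
    (r : R) (m : M) (hr : ¬ IsNilpotent r) (hm : ∀ s : R, s • m = 0 → s = 0) :
    ∀ k : ℕ, k ≠ 0 → r ^ k • m ∈ N → r • m ∈ N := by
  intro k
  induction k using Nat.strong_induction_on with
  | _ k ih =>
    intro hk hmem
    rcases Nat.lt_or_ge k 2 with h2 | h2
    · interval_cases k
      · exact absurd rfl hk
      · simpa using hmem
    · set j := (k + 1) / 2 with hj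
      have hj1 : 1 ≤ j := by omega
      have hjk : j < k := by omega
      have h2j : k ≤ 2 * j := by omega
      have hpow : (r ^ j) ^ 2 • m ∈ N := by
        have : (r ^ j) ^ 2 • m = r ^ (2 * j - k) • (r ^ k • m) := by
          have he : 2 * j - k + k = j * 2 := by omega
          rw [smul_smul, ← pow_add, he, pow_mul]
        rw [this]
        exact N.smul_mem _ hmem
      have hrj : ¬ IsNilpotent (r ^ j) := fun hn => hr (hn.of_pow)
      have : r ^ j • m ∈ N := h (r ^ j) m hpow hrj hm
      exact ih j hjk (by omega) this

theorem semiN_iff_radical_colon (R M : Type*) [CommRing R] [AddCommGroup M] [Module R M]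
    (N : Submodule R M) (hN : N ≠ ⊤) :
    IsSemiNSubmodule R M N ↔
      ∀ m : M, (∀ s : R, s • m = 0 → s = 0) →
        ((colonElem R M N m).radical : Set R) =
          (nilradical R : Set R) ∪ (colonElem R M N m : Set R) := by
  constructor
  · rintro ⟨-, h⟩ m hm
    ext r
    simp only [SetLike.mem_coe, Set.mem_union, mem_nilradical]
    constructor
    · intro hr
      rcases Ideal.mem_radical_iff.mp hr with ⟨n, hn⟩
      by_cases hnil : IsNilpotent r
      · exact Or.inl hnil
      · right
        rw [mem_colonElem] at hn ⊢
        rcases Nat.eq_zero_or_pos n with rfl | hn0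
        · simp only [pow_zero, one_smul] at hn
          exact N.smul_mem r hn
        · exact semiN_descend h r m hnil hm n (by omega) hn
    · rintro (hr | hr)
      · obtain ⟨n, hn⟩ := hr
        exact Ideal.mem_radical_iff.mpr ⟨n, (mem_colonElem N m _).mpr (by simp [hn])⟩
      · exact Ideal.le_radical hr
  · intro h
    refine ⟨hN, ?_⟩
    intro r m hmem hr hm
    have hrad : r ∈ (colonElem R M N m).radical :=
      Ideal.mem_radical_iff.mpr ⟨2, (mem_colonElem N m _).mpr hmem⟩
    have := h m hm
    have : r ∈ (nilradical R : Set R) ∪ (colonElem R M N m : Set R) := this ▸ hrad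
    rcases this with hr' | hr'
    · exact absurd (mem_nilradical.mp hr') hr
    · exact (mem_colonElem N m r).mp hr'
end

section
/- Let M be a torsion-free R-module and N a proper submodule of M. Then N is a semi r-submodule of M if and only if N is a semiprime submodule of M, if and only if N is a semi n-submodule of M. -/
def IsSemiRSubmodule (R M : Type*) [CommRing R] [AddCommGroup M] [Module R M]
    (N : Submodule R M) : Prop :=
  N ≠ ⊤ ∧ ∀ (r : R) (m : M), r ^ 2 • m ∈ N → (∀ m' : M, r • m' = 0 → m' = 0) →
    (∀ s : R, s • m = 0 → s = 0) → r • m ∈ N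

def IsSemiprimeSubmodule (R M : Type*) [CommRing R] [AddCommGroup M] [Module R M]
    (N : Submodule R M) : Prop :=
  N ≠ ⊤ ∧ ∀ (r : R) (m : M), r ^ 2 • m ∈ N → r • m ∈ N

theorem torsionFree_semiR_iff_semiprime_iff_semiN (R M : Type*) [CommRing R]
    [AddCommGroup M] [Module R M]
    (htf : ∀ (r : R) (m : M), r • m = 0 → r = 0 ∨ m = 0)
    (N : Submodule R M) (hN : N ≠ ⊤) :
    (IsSemiRSubmodule R M N ↔ IsSemiprimeSubmodule R M N) ∧
      (IsSemiprimeSubmodule R M N ↔ IsSemiNSubmodule R M N) := by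
  -- a nonzero nilpotent element would kill a nonzero vector, contradicting torsion-freeness
  have hM : ∃ m0 : M, m0 ≠ 0 := by
    by_contra h
    push_neg at h
    apply hN
    ext x
    simp [h x]
  obtain ⟨m0, hm0⟩ := hM
  have hnil : ∀ r : R, IsNilpotent r → r = 0 := by
    intro r ⟨n, hn⟩
    induction n with
    | zero =>
      have h1 : (1 : R) = 0 := by simpa using hn
      calc r = r * 1 := (mul_one r).symm
        _ = 0 := by rw [h1, mul_zero]
    | succ k ih =>
      by_contra hr
      have hpow : r ^ (k + 1) • m0 = 0 := by rw [hn, zero_smul]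
      rw [pow_succ, mul_comm, mul_smul] at hpow
      rcases htf r _ hpow with h | h
      · exact hr h
      · rcases htf (r ^ k) m0 h with h' | h'
        · exact hr (ih h')
        · exact hm0 h'
  have key : ∀ (r : R) (m : M), r ^ 2 • m ∈ N →
      (r = 0 ∨ m = 0) ∨ ((∀ m' : M, r • m' = 0 → m' = 0) ∧ (∀ s : R, s • m = 0 → s = 0)
        ∧ ¬ IsNilpotent r) := by
    intro r m _
    by_cases hr : r = 0
    · exact Or.inl (Or.inl hr)
    by_cases hm : m = 0
    · exact Or.inl (Or.inr hm)
    refine Or.inr ⟨fun m' h => ?_, fun s h => ?_, fun h => hr (hnil r h)⟩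
    · rcases htf r m' h with h' | h'
      · exact absurd h' hr
      · exact h'
    · rcases htf s m h with h' | h'
      · exact h'
      · exact absurd h' hm
  constructor
  · constructor
    · rintro ⟨_, h⟩
      refine ⟨hN, fun r m hrm => ?_⟩
      rcases key r m hrm with (h0 | h0) | ⟨h1, h2, _⟩
      · rw [h0, zero_smul]; exact N.zero_mem
      · rw [h0, smul_zero]; exact N.zero_mem
      · exact h r m hrm h1 h2
    · rintro ⟨_, h⟩
      exact ⟨hN, fun r m hrm _ _ => h r m hrm⟩
  · constructor
    · rintro ⟨_, h⟩
      exact ⟨hN, fun r m hrm _ _ => h r m hrm⟩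
    · rintro ⟨_, h⟩
      refine ⟨hN, fun r m hrm => ?_⟩
      rcases key r m hrm with (h0 | h0) | ⟨_, h2, h3⟩
      · rw [h0, zero_smul]; exact N.zero_mem
      · rw [h0, smul_zero]; exact N.zero_mem
      · exact h r m hrm h3 h2
end

section
/- Let M be a torsion-free R-module. If N is a semi n-submodule of M, then the ideal (N :_R M) = {r ∈ R : rM ⊆ N} is a semi n-ideal of R. -/
def IsSemiNIdeal (R : Type*) [CommRing R] (I : Ideal R) : Prop :=
  I ≠ ⊤ ∧ ∀ a : R, a ^ 2 ∈ I → ¬ IsNilpotent a → a ∈ I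

theorem colon_top_semiNIdeal (R M : Type*) [CommRing R] [AddCommGroup M] [Module R M]
    (htf : ∀ (r : R) (m : M), r • m = 0 → r = 0 ∨ m = 0)
    (N : Submodule R M) (hN : IsSemiNSubmodule R M N) :
    IsSemiNIdeal R (N.colon ⊤) := by
  obtain ⟨hNtop, hsemi⟩ := hN
  constructor
  · intro h
    apply hNtop
    rw [Submodule.eq_top_iff']
    intro m
    have h1 : (1 : R) ∈ N.colon ⊤ := by rw [h]; trivial
    have := Submodule.mem_colon.mp h1 m (by trivial)
    simpa using this
  · intro a ha hna
    rw [Submodule.mem_colon] at ha ⊢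
    intro m _
    by_cases hm : m = 0
    · simp [hm]
    · apply hsemi a m
      · have := ha m (by trivial)
        simpa [smul_smul, pow_two] using this
      · exact hna
      · intro s hs
        rcases htf s m hs with h | h
        · exact h
        · exact absurd h hm
end

section
/- Let M be a finitely generated torsion-free multiplication module over a ring R, and N = IM a submodule of M for an ideal I. If N is a semi n-submodule of M, then I is a semi n-ideal of R. -/
theorem semiNIdeal_of_semiN_smul_top (R M : Type*) [CommRing R] [AddCommGroup M]
    [Module R M] [Module.Finite R M]
    (htf : ∀ (r : R) (m : M), r • m = 0 → r = 0 ∨ m = 0)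
    (hmul : ∀ P : Submodule R M, ∃ J : Ideal R, P = J • (⊤ : Submodule R M))
    (I : Ideal R) (hN : IsSemiNSubmodule R M (I • (⊤ : Submodule R M))) :
    IsSemiNIdeal R I := by
  obtain ⟨hNtop, hNn⟩ := hN
  -- I ≠ ⊤
  have hItop : I ≠ ⊤ := by
    rintro rfl
    exact hNtop (by simp)
  -- M ≠ 0: there is a nonzero element
  have hM0 : ∃ m₀ : M, m₀ ≠ 0 := by
    by_contra h
    push_neg at h
    apply hNtop
    ext x
    simp [h x, Submodule.zero_mem]
  obtain ⟨m₀, hm₀⟩ := hM0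
  -- the "trace" ideal θ
  set A : M → Ideal R := fun m => (Submodule.span R ({m} : Set M)).colon ⊤ with hA
  have hθ : (1 : R) ∈ ⨆ m : M, A m := by
    set θ : Ideal R := ⨆ m : M, A m with hθdef
    have hle : (⊤ : Submodule R M) ≤ θ • ⊤ := by
      intro m _
      obtain ⟨J, hJ⟩ := hmul (Submodule.span R ({m} : Set M))
      have hJA : J ≤ A m := by
        intro r hr
        rw [hA, Submodule.mem_colon]
        intro p hp
        rw [hJ]
        exact Submodule.smul_mem_smul hr hp
      have hmem : m ∈ J • (⊤ : Submodule R M) := by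
        rw [← hJ]; exact Submodule.mem_span_singleton_self m
      exact Submodule.smul_mono (hJA.trans (le_iSup A m)) le_rfl hmem
    obtain ⟨r, hr1, hr0⟩ :=
      Submodule.exists_sub_one_mem_and_smul_eq_zero_of_fg_of_le_smul θ ⊤
        (Module.Finite.fg_top) hle
    have : r = 0 := by
      rcases htf r m₀ (hr0 m₀ trivial) with h | h
      · exact h
      · exact absurd h hm₀
    rw [this, zero_sub] at hr1
    simpa using θ.neg_mem hr1
  rw [Submodule.mem_iSup_iff_exists_finsupp] at hθ
  obtain ⟨f, hf, hfsum⟩ := hθ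
  refine ⟨hItop, fun a ha2 hanil => ?_⟩
  -- a • M ⊆ I • ⊤
  have haM : ∀ m : M, a • m ∈ I • (⊤ : Submodule R M) := by
    intro m
    by_cases hm : m = 0
    · simp [hm, Submodule.zero_mem]
    · exact hNn a m (Submodule.smul_mem_smul ha2 trivial) hanil
        (fun s hs => (htf s m hs).resolve_right hm)
  -- each f m * a ∈ I
  have key : ∀ m : M, f m * a ∈ I := by
    intro m
    by_cases hm : m = 0
    · -- f m annihilates M, hence f m = 0
      have hc := hf m
      rw [hA, Submodule.mem_colon] at hc
      subst hm
      have h0 : f 0 • m₀ ∈ Submodule.span R ({(0 : M)} : Set M) := hc m₀ trivial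
      rw [Submodule.span_zero_singleton, Submodule.mem_bot] at h0
      rcases htf (f 0) m₀ h0 with h | h
      · rw [h, zero_mul]; exact I.zero_mem
      · exact absurd h hm₀
    · have hc := hf m
      rw [hA, Submodule.mem_colon] at hc
      -- f m • (a • m) ∈ I • span {m}
      have hmem : f m • (a • m) ∈ I • Submodule.span R ({m} : Set M) := by
        refine Submodule.smul_induction_on (haM m) (fun b hb y _ => ?_)
          (fun y z hy hz => by simpa [smul_add] using Submodule.add_mem _ hy hz)
        rw [smul_comm]
        exact Submodule.smul_mem_smul hb (hc y trivial)
      rw [Submodule.mem_smul_span_singleton] at hmem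
      obtain ⟨b, hb, hbm⟩ := hmem
      have : (f m * a - b) • m = 0 := by
        rw [sub_smul, mul_smul, ← hbm, sub_self]
      rcases htf _ _ this with h | h
      · have : f m * a = b := by linear_combination h
        rw [this]; exact hb
      · exact absurd h hm
  -- sum up
  have : a = f.sum fun _ c => c * a := by
    rw [← Finsupp.sum_mul, hfsum, one_mul]
  rw [this]
  exact Ideal.sum_mem _ fun m _ => key m
end

section
/- Let R be an integral domain, N a semi n-submodule of an R-module M, and I an ideal of R such that (N :_M I) ≠ M. Then (N :_M I) = {m ∈ M : Im ⊆ N} is a semi n-submodule of M. -/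
/-- The submodule `(N :_M I) = {m ∈ M : I • m ⊆ N}`. -/
def colonSubmodule (R M : Type*) [CommRing R] [AddCommGroup M] [Module R M]
    (N : Submodule R M) (I : Ideal R) : Submodule R M where
  carrier := {m | ∀ a ∈ I, a • m ∈ N}
  add_mem' := fun hx hy a ha => by simpa [smul_add] using N.add_mem (hx a ha) (hy a ha)
  zero_mem' := fun a ha => by simpa using N.zero_mem
  smul_mem' := fun c m hm => fun a ha => by
    rw [smul_comm]
    exact N.smul_mem c (hm a ha)

theorem colonSubmodule_semiN (R M : Type*) [CommRing R] [IsDomain R] [AddCommGroup M]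
    [Module R M] (N : Submodule R M) (hN : IsSemiNSubmodule R M N) (I : Ideal R)
    (hproper : colonSubmodule R M N I ≠ ⊤) :
    IsSemiNSubmodule R M (colonSubmodule R M N I) := by
  refine ⟨hproper, fun r m hr2 hnil hann a ha => ?_⟩
  rcases eq_or_ne a 0 with rfl | ha0
  · simpa using N.zero_mem
  have h1 : r ^ 2 • (a • m) ∈ N := by
    rw [smul_comm]
    exact hr2 a ha
  have h2 : ∀ s : R, s • (a • m) = 0 → s = 0 := by
    intro s hs
    rw [smul_smul] at hs
    have := hann _ hs
    exact (mul_eq_zero.mp this).resolve_right ha0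
  have := hN.2 r (a • m) h1 hnil h2
  rwa [smul_comm] at this
end

section
/- Let R be an integral domain and M an R-module. Every maximal semi n-submodule of M (i.e., a semi n-submodule not properly contained in any other semi n-submodule) is a prime submodule of M. -/
theorem maximal_semiN_is_prime (R M : Type*) [CommRing R] [IsDomain R] [AddCommGroup M]
    [Module R M] (N : Submodule R M) (hN : IsSemiNSubmodule R M N)
    (hmax : ∀ L : Submodule R M, IsSemiNSubmodule R M L → N ≤ L → N = L) :
    ∀ (r : R) (m : M), r • m ∈ N → (∀ m' : M, r • m' ∈ N) ∨ m ∈ N := by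
  intro r m hrm
  by_cases hr : r = 0
  · left; intro m'; simp [hr]
  by_cases hall : ∀ m' : M, r • m' ∈ N
  · left; exact hall
  right
  push_neg at hall
  obtain ⟨m₀, hm₀⟩ := hall
  set N' : Submodule R M := N.comap (LinearMap.lsmul R M r) with hN'
  have hmem : ∀ x : M, x ∈ N' ↔ r • x ∈ N := by
    intro x; simp [hN', Submodule.mem_comap]
  have hle : N ≤ N' := fun x hx => (hmem x).mpr (N.smul_mem r hx)
  have hsemi : IsSemiNSubmodule R M N' := by
    constructor
    · intro h
      exact hm₀ ((hmem m₀).mp (h ▸ Submodule.mem_top))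
    · intro s x hsx hnil hann
      have h1 : s ^ 2 • (r • x) ∈ N := by
        have : r • (s ^ 2 • x) ∈ N := (hmem _).mp hsx
        rwa [smul_comm] at this
      have hann' : ∀ t : R, t • (r • x) = 0 → t = 0 := by
        intro t ht
        rw [smul_smul] at ht
        exact (mul_eq_zero.mp (hann (t * r) ht)).resolve_right hr
      have h2 := hN.2 s (r • x) h1 hnil hann'
      rw [smul_comm] at h2
      exact (hmem _).mpr h2
  have heq := hmax N' hsemi hle
  have : m ∈ N' := (hmem m).mpr hrm
  rwa [← heq] at this
end

section
/- Let R be an integral domain, M a finitely generated faithful multiplication R-module, I a finitely generated faithful multiplication ideal of R, and N a proper submodule of M. If IN is a semi n-submodule of M, then N is a semi n-submodule of M. -/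
open Pointwise
theorem semiN_of_smul_semiN (R M : Type*) [CommRing R] [IsDomain R] [AddCommGroup M]
    [Module R M] [Module.Finite R M]
    (hfaith : ∀ r : R, (∀ m : M, r • m = 0) → r = 0)
    (hmul : ∀ P : Submodule R M, ∃ J : Ideal R, P = J • (⊤ : Submodule R M))
    (I : Ideal R) (hIfg : I.FG)
    (hIfaith : ∀ r : R, (∀ a ∈ I, r * a = 0) → r = 0)
    (hImul : ∀ K : Ideal R, K ≤ I → ∃ J : Ideal R, K = J * I)
    (N : Submodule R M) (hNproper : N ≠ ⊤)
    (h : IsSemiNSubmodule R M (I • N)) :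
    IsSemiNSubmodule R M N := by
  classical
  -- M is torsion-free
  have tf : ∀ a : R, a ≠ 0 → ∀ y : M, a • y = 0 → y = 0 := by
    intro a ha y hy
    obtain ⟨J, hJ⟩ := hmul (Submodule.span R {y})
    have hJ0 : J = ⊥ := by
      rw [eq_bot_iff]
      intro j hj
      have haj : a * j = 0 := by
        apply hfaith
        intro m'
        have hjm : j • m' ∈ Submodule.span R {y} := by
          rw [hJ]
          exact Submodule.smul_mem_smul hj Submodule.mem_top
        obtain ⟨c, hc⟩ := Submodule.mem_span_singleton.mp hjm
        rw [mul_smul, ← hc, smul_comm, hy, smul_zero]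
      rw [Submodule.mem_bot]
      exact (mul_eq_zero.mp haj).resolve_left ha
    have hy' : y ∈ Submodule.span R {y} := Submodule.mem_span_singleton_self y
    rw [hJ, hJ0, Submodule.bot_smul, Submodule.mem_bot] at hy'
    exact hy'
  -- generators of I
  obtain ⟨S, hS⟩ := hIfg
  have hIfg' : I.FG := ⟨S, hS⟩
  have hSsub : ∀ a : R, a ∈ S → a ∈ I := by
    intro a ha
    rw [← hS]
    exact Ideal.subset_span ha
  choose J hJ using fun a : {x : R // x ∈ S} =>
    hImul (Ideal.span {(a : R)})
      (Ideal.span_le.mpr (Set.singleton_subset_iff.mpr (hSsub a a.2)))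
  -- θ(I) = R via Nakayama
  set θ : Ideal R := ⨆ a ∈ S.attach, J a with hθ
  have hle : I ≤ θ • I := by
    rw [Ideal.smul_eq_mul]
    conv_lhs => rw [← hS]
    rw [Ideal.span_le]
    intro x hx
    have hx1 : x ∈ Ideal.span {x} := Ideal.subset_span rfl
    rw [hJ ⟨x, hx⟩] at hx1
    exact Ideal.mul_mono_left (le_biSup J (Finset.mem_attach S ⟨x, hx⟩)) hx1
  obtain ⟨r, hrθ, hr⟩ :=
    Submodule.exists_mem_and_smul_eq_self_of_fg_of_le_smul θ I hIfg' hle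
  have hr1 : r = 1 := by
    have : 1 - r = 0 := by
      apply hIfaith
      intro c hc
      rw [sub_mul, one_mul, ← smul_eq_mul, hr c hc, sub_self]
    exact (sub_eq_zero.mp this).symm
  have h1θ : (1 : R) ∈ ⨆ a ∈ S.attach, J a := by rw [← hθ, ← hr1]; exact hrθ
  obtain ⟨μ, hμ⟩ := (Submodule.mem_iSup_finset_iff_exists_sum (fun a => J a) 1).mp h1θ
  -- prove N is semi n-submodule
  refine ⟨hNproper, ?_⟩
  intro r' m hr2 hnil htf
  have hr0 : r' ≠ 0 := by
    rintro rfl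
    exact hnil (IsNilpotent.zero)
  -- I • span{r' • m} ≤ I • N
  have hIx : ∀ a ∈ I, a • (r' • m) ∈ I • N := by
    intro a ha
    rcases eq_or_ne a 0 with rfl | ha0
    · rw [zero_smul]
      exact (I • N).zero_mem
    · have h2 : r' ^ 2 • (a • m) ∈ I • N := by
        rw [smul_comm]
        exact Submodule.smul_mem_smul ha hr2
      have htf' : ∀ s : R, s • (a • m) = 0 → s = 0 := by
        intro s hs
        rw [smul_comm, ← smul_assoc, smul_eq_mul] at hs
        exact (mul_eq_zero.mp (htf _ hs)).resolve_left ha0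
      have := h.2 r' (a • m) h2 hnil htf'
      rwa [smul_comm] at this
  -- each μ a • (r' • m) lies in N
  have hstep : ∀ a : {x : R // x ∈ S}, (μ a : R) • (r' • m) ∈ N := by
    intro a
    rcases eq_or_ne (a : R) 0 with h0 | h0
    · have hz : (μ a : R) = 0 := by
        apply hIfaith
        intro c hc
        have hmem : (μ a : R) * c ∈ J a * I := Ideal.mul_mem_mul (μ a).2 hc
        rw [← hJ a, h0, Ideal.span_singleton_eq_bot.mpr rfl, Ideal.mem_bot] at hmem
        exact hmem
      rw [hz, zero_smul]
      exact N.zero_mem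
    · have hIN : (a : R) • (r' • m) ∈ I • N := hIx a (hSsub a a.2)
      have hkey : (μ a : R) • ((a : R) • (r' • m)) ∈ Ideal.span {(a : R)} • N := by
        refine Submodule.smul_induction_on
          (p := fun z => (μ a : R) • z ∈ Ideal.span {(a : R)} • N) hIN ?_ ?_
        · intro c hc n hn
          rw [smul_smul]
          have hmem : (μ a : R) * c ∈ Ideal.span {(a : R)} := by
            rw [hJ a]
            exact Ideal.mul_mem_mul (μ a).2 hc
          exact Submodule.smul_mem_smul hmem hn
        · intro x y hx hy
          rw [smul_add]
          exact Submodule.add_mem _ hx hy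
      rw [Submodule.ideal_span_singleton_smul] at hkey
      have hkey' : (μ a : R) • ((a : R) • (r' • m)) ∈ (a : R) • (N : Set M) := hkey
      obtain ⟨n, hn, hna⟩ := Set.mem_smul_set.mp hkey'
      have hcancel : (a : R) • ((μ a : R) • (r' • m) - n) = 0 := by
        rw [smul_sub, hna, smul_comm, sub_self]
      have := tf (a : R) h0 _ hcancel
      rw [sub_eq_zero] at this
      rw [this]
      exact hn
  have hsum : r' • m = ∑ a ∈ S.attach, (μ a : R) • (r' • m) := by
    rw [← Finset.sum_smul, hμ, one_smul]
  rw [hsum]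
  exact Submodule.sum_mem N fun a _ => hstep a
end

section
/- Let f : M → M' be a surjective R-module homomorphism and N a semi n-submodule of M with Ker(f) ⊆ N. Then f(N) is a semi n-submodule of M'. -/
theorem map_semiN (R M M' : Type*) [CommRing R] [AddCommGroup M] [Module R M]
    [AddCommGroup M'] [Module R M'] (f : M →ₗ[R] M') (hf : Function.Surjective f)
    (N : Submodule R M) (hN : IsSemiNSubmodule R M N) (hker : LinearMap.ker f ≤ N) :
    IsSemiNSubmodule R M' (N.map f) := by
  obtain ⟨hNt, hNs⟩ := hN
  constructor
  · intro h
    apply hNt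
    have : Submodule.comap f (Submodule.map f N) = N := by
      rw [Submodule.comap_map_eq, sup_eq_left.mpr hker]
    rw [h, Submodule.comap_top] at this
    exact this.symm
  · rintro r m' hmem hnil hann
    obtain ⟨m, rfl⟩ := hf m'
    obtain ⟨n, hn, hfn⟩ := hmem
    have hk : r ^ 2 • m - n ∈ LinearMap.ker f := by
      simp [LinearMap.mem_ker, hfn]
    have hmN : r ^ 2 • m ∈ N := by
      have := add_mem (hker hk) hn
      simpa using this
    have hannm : ∀ s : R, s • m = 0 → s = 0 := by
      intro s hs
      apply hann s
      rw [← map_smul, hs, map_zero]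
    have := hNs r m hmN hnil hannm
    exact ⟨r • m, this, by rw [map_smul]⟩
end

section
/- Let f : M → M' be an R-module isomorphism and N' a semi n-submodule of M'. Then f⁻¹(N') is a semi n-submodule of M. -/
theorem comap_equiv_semiN (R M M' : Type*) [CommRing R] [AddCommGroup M] [Module R M]
    [AddCommGroup M'] [Module R M'] (f : M ≃ₗ[R] M')
    (N' : Submodule R M') (hN' : IsSemiNSubmodule R M' N') :
    IsSemiNSubmodule R M (N'.comap (f : M →ₗ[R] M')) := by
  obtain ⟨hne, h⟩ := hN'
  constructor
  · intro htop
    apply hne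
    rw [Submodule.eq_top_iff']
    intro x
    have := Submodule.eq_top_iff'.mp htop (f.symm x)
    simpa using this
  · intro r m hm hr hann
    have h1 : r ^ 2 • f m ∈ N' := by
      rw [← map_smul]; exact hm
    have h2 : ∀ s : R, s • f m = 0 → s = 0 := by
      intro s hs
      apply hann s
      have : f (s • m) = 0 := by rw [map_smul]; exact hs
      simpa using f.injective (by simpa using this)
    have := h r (f m) h1 hr h2
    simpa [Submodule.mem_comap, map_smul] using this
end

section
/- Let S be a multiplicatively closed subset of R consisting of regular elements (non-zerodivisors), and N a semi n-submodule of an R-module M such that ⋃_{s∈S}(N :_M s) ≠ M. Then S⁻¹N is a semi n-submodule of the S⁻¹R-module S⁻¹M. -/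
/-!
Write `r = a/s` and `x = m/t`. If `r² x ∈ S⁻¹N`, then `v a² m ∈ N` for some `v ∈ S`; replacing `m/t`
by `(v m)/(v t)` puts `a² m` itself in `N`. Non-nilpotence of `a/s` gives that of `a`, and since `S`
consists of non-zerodivisors, `R → S⁻¹R` is injective, so a trivial annihilator of `x` forces a
trivial annihilator of `m`. The semi n-property of `N` then yields `a m ∈ N`, i.e. `r x ∈ S⁻¹N`.
Properness of `S⁻¹N` is exactly the condition that not every `m` has some `s m ∈ N`.
-/

section

variable {R M : Type*} [CommRing R] [AddCommGroup M] [Module R M] {S : Submonoid R}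

namespace LocalizedModule

theorem mk_mem_localized_iff {N : Submodule R M} {m : M} {t : S} :
    mk m t ∈ N.localized S ↔ ∃ u : S, u • m ∈ N := by
  constructor
  · rintro ⟨n, hn, u, hu⟩
    obtain ⟨c, hc⟩ := mk_eq.mp ((IsLocalizedModule.mk_eq_mk' u n).trans hu)
    exact ⟨c * u, by rw [mul_smul, ← hc]; exact N.smul_of_tower_mem _ (N.smul_of_tower_mem _ hn)⟩
  · rintro ⟨u, hu⟩
    exact ⟨u • m, hu, u * t, by rw [← IsLocalizedModule.mk_eq_mk', mk_cancel_common_left]⟩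

theorem eq_zero_of_smul_eq_zero_of_mk (hS : S ≤ nonZeroDivisors R) {m : M} {t : S}
    (h : ∀ r : Localization S, r • mk m t = 0 → r = 0) {b : R} (hb : b • m = 0) : b = 0 := by
  refine IsLocalization.injective (Localization S) hS (?_ : algebraMap R _ b = algebraMap R _ 0)
  rw [map_zero]
  apply h
  rw [algebraMap_smul, smul'_mk, hb, zero_mk]

end LocalizedModule

theorem Submodule.localized_eq_top_iff (N : Submodule R M) :
    N.localized S = ⊤ ↔ ∀ m : M, ∃ s : S, s • m ∈ N := by
  refine ⟨fun h m ↦ ?_, fun h ↦ eq_top_iff.mpr fun x _ ↦ ?_⟩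
  · exact LocalizedModule.mk_mem_localized_iff.mp (h ▸ mem_top (x := LocalizedModule.mk m 1))
  · induction x using LocalizedModule.induction_on with
    | h m t => exact LocalizedModule.mk_mem_localized_iff.mpr (h m)

end

theorem Localization.isNilpotent_mk {R : Type*} [CommRing R] {S : Submonoid R} {a : R}
    (ha : IsNilpotent a) (s : S) : IsNilpotent (mk a s : Localization S) := by
  obtain ⟨k, hk⟩ := ha
  exact ⟨k, by rw [mk_pow, hk, mk_zero]⟩

open LocalizedModule in
theorem localized_semiN (R M : Type*) [CommRing R] [AddCommGroup M] [Module R M]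
    (S : Submonoid R) (hS : (S : Set R) ⊆ (nonZeroDivisors R : Set R))
    (N : Submodule R M) (hN : IsSemiNSubmodule R M N)
    (hU : (⋃ s ∈ S, {m : M | s • m ∈ N}) ≠ Set.univ) :
    IsSemiNSubmodule (Localization S) (LocalizedModule S M) (N.localized S) := by
  refine ⟨fun htop ↦ hU (Set.eq_univ_of_forall fun m ↦ ?_), fun r x hr2 hnil hann ↦ ?_⟩
  · obtain ⟨s, hs⟩ := N.localized_eq_top_iff.mp htop m
    exact Set.mem_biUnion s.2 hs
  induction r using Localization.induction_on with | H p => ?_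
  induction x using LocalizedModule.induction_on with | h m t => ?_
  obtain ⟨a, s⟩ := p
  rw [Localization.mk_pow, mk_smul_mk, mk_mem_localized_iff] at hr2
  obtain ⟨v, hv⟩ := hr2
  rw [← mk_cancel_common_left v] at hann ⊢
  have hav : a • v • m ∈ N := hN.2 a (v • m) (by rwa [smul_comm])
    (mt (Localization.isNilpotent_mk · s) hnil) (fun _ ↦ eq_zero_of_smul_eq_zero_of_mk hS hann)
  rw [mk_smul_mk, mk_mem_localized_iff]
  exact ⟨1, by rwa [one_smul]⟩
end

section
/- Let S ⊆ reg(R) be a multiplicatively closed subset and N a submodule of an R-module M with S ∩ Z_N(M) = ∅, where Z_N(M) = {r ∈ R : rm ∈ N for some m ∈ M \ N}. If S⁻¹N is a semi n-submodule of S⁻¹M, then N is a semi n-submodule of M. -/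
section LocalizedModule

variable {R A M M' : Type*} [CommSemiring R] [CommSemiring A] [Algebra R A]
  [AddCommMonoid M] [Module R M] [AddCommMonoid M'] [Module R M'] [Module A M']
  [IsScalarTower R A M'] (S : Submonoid R) [IsLocalization S A]
  (f : M →ₗ[R] M') [IsLocalizedModule S f]

theorem Submodule.exists_smul_mem_of_apply_mem_localized₀ {N : Submodule R M} {m : M}
    (h : f m ∈ N.localized₀ S f) : ∃ s : S, s • m ∈ N := by
  obtain ⟨n, hn, s, hns⟩ := h
  rw [IsLocalizedModule.mk'_eq_iff, ← LinearMap.map_smul_of_tower] at hns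
  obtain ⟨c, hc⟩ := IsLocalizedModule.exists_of_eq (S := S) hns
  refine ⟨c * s, ?_⟩
  rw [mul_smul, ← hc]
  exact N.smul_of_tower_mem c hn

theorem IsLocalizedModule.eq_zero_of_smul_apply_eq_zero (hS : S ≤ nonZeroDivisors R) {m : M}
    (hm : ∀ r : R, r • m = 0 → r = 0) (x : A) (hx : x • f m = 0) : x = 0 := by
  obtain ⟨⟨a, t⟩, hxt⟩ := IsLocalization.surj S x
  have hfa : f (a • m) = 0 := by
    rw [map_smul, ← algebraMap_smul A, ← hxt, mul_comm, mul_smul, hx, smul_zero]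
  obtain ⟨c, hc⟩ := (IsLocalizedModule.eq_zero_iff S f).mp hfa
  have ha : a = 0 := by
    rw [Submonoid.smul_def, smul_smul] at hc
    exact (mem_nonZeroDivisors_iff_right.mp (hS c.2)) a (by rw [mul_comm]; exact hm _ hc)
  rw [ha, map_zero] at hxt
  exact (IsLocalization.map_units A t).mul_left_eq_zero.mp hxt

end LocalizedModule

theorem semiN_of_localized_semiN (R M : Type*) [CommRing R] [AddCommGroup M] [Module R M]
    (S : Submonoid R) (hS : (S : Set R) ⊆ (nonZeroDivisors R : Set R))
    (N : Submodule R M)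
    (hZ : ∀ s ∈ S, ∀ m : M, m ∉ N → s • m ∉ N)
    (h : IsSemiNSubmodule (Localization S) (LocalizedModule S M) (N.localized S)) :
    IsSemiNSubmodule R M N := by
  obtain ⟨hne, hsemi⟩ := h
  refine ⟨fun hN => hne (hN ▸ Submodule.localized'_top _ _ _), fun r m hr hnil hm => ?_⟩
  let f := LocalizedModule.mkLinearMap S M
  have hloc : algebraMap R (Localization S) r • f m ∈ N.localized S := by
    refine hsemi _ _ ?_ ?_ (IsLocalizedModule.eq_zero_of_smul_apply_eq_zero S f hS hm)
    · rw [← map_pow, algebraMap_smul, ← map_smul]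
      exact Submodule.map_le_localized₀ S f N (Submodule.mem_map_of_mem hr)
    · rwa [IsNilpotent.map_iff (IsLocalization.injective _ hS)]
  rw [algebraMap_smul, ← map_smul] at hloc
  obtain ⟨s, hs⟩ := Submodule.exists_smul_mem_of_apply_mem_localized₀ S f hloc
  by_contra hrm
  exact hZ s s.2 _ hrm hs
end

section
/- Let M₁, ..., M_k be R-modules, M = M₁ × ⋯ × M_k, and N = N₁ × ⋯ × N_k with each N_i a submodule of M_i. If N is a semi n-submodule of M, then N_i is a semi n-submodule of M_i for each i with N_i ≠ M_i. Conversely, if each M_i with N_i ≠ M_i is torsion-free and each such N_i is a semi n-submodule of M_i, then N is a semi n-submodule of M. -/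
theorem pi_semiN (R : Type*) [CommRing R] {ι : Type*} [Fintype ι]
    (M : ι → Type*) [∀ i, AddCommGroup (M i)] [∀ i, Module R (M i)]
    (N : ∀ i, Submodule R (M i))
    (hNtop : Submodule.pi Set.univ N ≠ (⊤ : Submodule R (∀ i, M i))) :
    (IsSemiNSubmodule R (∀ i, M i) (Submodule.pi Set.univ N) →
      ∀ i, N i ≠ ⊤ → IsSemiNSubmodule R (M i) (N i)) ∧
    ((∀ i, N i ≠ ⊤ →
        (∀ (r : R) (m : M i), r • m = 0 → r = 0 ∨ m = 0) ∧ IsSemiNSubmodule R (M i) (N i)) →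
      IsSemiNSubmodule R (∀ i, M i) (Submodule.pi Set.univ N)) := by
  classical
  constructor
  · rintro ⟨-, hN⟩ i hi
    refine ⟨hi, fun r m hr2 hnil hann => ?_⟩
    have key := hN r (Pi.single i m) ?_ hnil ?_
    · have := key i (Set.mem_univ i)
      simpa using this
    · intro j _
      by_cases hji : j = i
      · subst hji; simpa using hr2
      · simp [Pi.single_eq_of_ne hji]
    · intro s hs
      apply hann
      have := congrFun hs i
      simpa using this
  · intro h
    refine ⟨hNtop, fun r m hr2 hnil hann => ?_⟩
    intro i _
    by_cases hi : N i = ⊤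
    · simp [hi]
    · obtain ⟨htf, -, hsn⟩ := h i hi
      by_cases hm : m i = 0
      · simp [Pi.smul_apply, hm]
      · refine hsn r (m i) ?_ hnil ?_
        · simpa using hr2 i (Set.mem_univ i)
        · intro s hs
          rcases htf s (m i) hs with h | h
          · exact h
          · exact absurd h hm
end

section
/- Let f : R₁ → R₂ be a ring homomorphism and J an ideal of R₂. The nilradical of the amalgamation ring R₁ ⋈^f J = {(r, f(r)+j) : r ∈ R₁, j ∈ J} equals √0_{R₁} ⋈^f J = {(r, f(r)+j) : r ∈ √0_{R₁}, j ∈ J} if and only if J ⊆ √0_{R₂}. -/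
variable {R₁ R₂ : Type*} [CommRing R₁] [CommRing R₂]

/-- The amalgamation `R₁ ⋈^f J = {(r, f r + j) : r ∈ R₁, j ∈ J}`, realized as the subring
of `R₁ × R₂` consisting of pairs `(r, s)` with `s - f r ∈ J`. -/
def amalgamation (f : R₁ →+* R₂) (J : Ideal R₂) : Subring (R₁ × R₂) where
  carrier := {x | x.2 - f x.1 ∈ J}
  mul_mem' := fun {a b} ha hb => by
    have h : (a * b).2 - f ((a * b).1) =
        a.2 * (b.2 - f b.1) + (a.2 - f a.1) * f b.1 := by
      simp only [Prod.fst_mul, Prod.snd_mul, map_mul]; ring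
    show (a * b).2 - f ((a * b).1) ∈ J
    rw [h]
    exact J.add_mem (J.mul_mem_left _ hb) (J.mul_mem_right _ ha)
  one_mem' := by simp
  add_mem' := fun {a b} ha hb => by
    have h : (a + b).2 - f ((a + b).1) = (a.2 - f a.1) + (b.2 - f b.1) := by
      simp only [Prod.fst_add, Prod.snd_add, map_add]; ring
    show (a + b).2 - f ((a + b).1) ∈ J
    rw [h]
    exact J.add_mem ha hb
  zero_mem' := by simp
  neg_mem' := fun {a} ha => by
    have h : (-a).2 - f ((-a).1) = -(a.2 - f a.1) := by
      simp only [Prod.fst_neg, Prod.snd_neg, map_neg]; ring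
    show (-a).2 - f ((-a).1) ∈ J
    rw [h]
    exact J.neg_mem ha


lemma subring_isNilpotent_iff {R : Type*} [CommRing R] (S : Subring R) (a : S) :
    IsNilpotent a ↔ IsNilpotent (a : R) := by
  constructor
  · rintro ⟨n, hn⟩
    exact ⟨n, by rw [← Subring.coe_pow, hn, Subring.coe_zero]⟩
  · rintro ⟨n, hn⟩
    exact ⟨n, Subtype.ext (by rw [Subring.coe_pow, hn, Subring.coe_zero])⟩

lemma prod_isNilpotent_iff {A B : Type*} [CommRing A] [CommRing B] (x : A × B) :
    IsNilpotent x ↔ IsNilpotent x.1 ∧ IsNilpotent x.2 := by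
  constructor
  · rintro ⟨n, hn⟩
    exact ⟨⟨n, congrArg Prod.fst hn⟩, ⟨n, congrArg Prod.snd hn⟩⟩
  · rintro ⟨⟨n, hn⟩, ⟨m, hm⟩⟩
    refine ⟨n + m, Prod.ext ?_ ?_⟩
    · show x.1 ^ (n + m) = 0
      rw [pow_add, hn, zero_mul]
    · show x.2 ^ (n + m) = 0
      rw [pow_add, hm, mul_zero]

theorem nilradical_amalgamation (f : R₁ →+* R₂) (J : Ideal R₂) :
    ((nilradical (amalgamation f J) : Ideal (amalgamation f J)) : Set (amalgamation f J)) =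
        {a : amalgamation f J | IsNilpotent ((a : R₁ × R₂).1)} ↔
      J ≤ nilradical R₂ := by
  constructor
  · intro h j hj
    have hmem : ((0, j) : R₁ × R₂) ∈ amalgamation f J := by
      show j - f 0 ∈ J; simpa using hj
    have ha : (⟨(0, j), hmem⟩ : amalgamation f J) ∈
        {a : amalgamation f J | IsNilpotent ((a : R₁ × R₂).1)} := ⟨1, by simp⟩
    rw [← h] at ha
    have : IsNilpotent (⟨(0, j), hmem⟩ : amalgamation f J) := ha
    rw [subring_isNilpotent_iff, prod_isNilpotent_iff] at this
    exact this.2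
  · intro hJ
    ext a
    simp only [SetLike.mem_coe, mem_nilradical, Set.mem_setOf_eq,
      subring_isNilpotent_iff, prod_isNilpotent_iff]
    constructor
    · exact fun h => h.1
    · intro h1
      refine ⟨h1, ?_⟩
      have hj : IsNilpotent ((a : R₁ × R₂).2 - f (a : R₁ × R₂).1) := hJ a.2
      have hf : IsNilpotent (f (a : R₁ × R₂).1) := h1.map f
      have := Commute.isNilpotent_add (Commute.all _ _) hj hf
      simpa using this
end

section
/- Let N be a submodule of an R-module M and J an ideal of R with J ⊆ √0 ∩ Ann_R(M). If N is a semi n-submodule of M, then the duplication N ⋈ J = {(n, m) ∈ N × M : n − m ∈ JM} is a semi n-submodule of the (R ⋈ J)-module M ⋈ J = {(m, m') ∈ M × M : m − m' ∈ JM}; conversely, if N ⋈ J is a semi n-submodule of M ⋈ J, then N is a semi n-submodule of M. -/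
set_option synthInstance.maxHeartbeats 1000000
set_option maxHeartbeats 1000000

section Prod

variable (R : Type*) [CommRing R] (M : Type*) [AddCommGroup M] [Module R M]

/-- The componentwise action of `R × R` on `M × M`. -/
instance prodSMul : SMul (R × R) (M × M) := ⟨fun a m => (a.1 • m.1, a.2 • m.2)⟩

@[simp] theorem prod_smul_def (a : R × R) (m : M × M) :
    a • m = (a.1 • m.1, a.2 • m.2) := rfl

instance prodMulAction : MulAction (R × R) (M × M) where
  one_smul m := by refine Prod.ext ?_ ?_ <;> simp
  mul_smul a b m := by refine Prod.ext ?_ ?_ <;> simp [mul_smul]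

instance prodDistribMulAction : DistribMulAction (R × R) (M × M) where
  smul_zero a := by refine Prod.ext ?_ ?_ <;> simp
  smul_add a m n := by refine Prod.ext ?_ ?_ <;> simp

instance prodProdModule : Module (R × R) (M × M) where
  add_smul a b m := by refine Prod.ext ?_ ?_ <;> simp [add_smul]
  zero_smul m := by refine Prod.ext ?_ ?_ <;> simp

end Prod

variable (R : Type*) [CommRing R] (J : Ideal R) (M : Type*) [AddCommGroup M] [Module R M]

/-- The amalgamated duplication `R ⋈ J = {(r, r + j) : r ∈ R, j ∈ J}` as a subring of
`R × R`: pairs `(r, s)` with `s - r ∈ J`. -/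
def dupRing : Subring (R × R) where
  carrier := {x | x.2 - x.1 ∈ J}
  mul_mem' := fun {a b} ha hb => by
    have h : (a * b).2 - (a * b).1 = a.2 * (b.2 - b.1) + (a.2 - a.1) * b.1 := by
      simp only [Prod.fst_mul, Prod.snd_mul]; ring
    show (a * b).2 - (a * b).1 ∈ J
    rw [h]
    exact J.add_mem (J.mul_mem_left _ hb) (J.mul_mem_right _ ha)
  one_mem' := by simp
  add_mem' := fun {a b} ha hb => by
    have h : (a + b).2 - (a + b).1 = (a.2 - a.1) + (b.2 - b.1) := by
      simp only [Prod.fst_add, Prod.snd_add]; ring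
    show (a + b).2 - (a + b).1 ∈ J
    rw [h]
    exact J.add_mem ha hb
  zero_mem' := by simp
  neg_mem' := fun {a} ha => by
    have h : (-a).2 - (-a).1 = -(a.2 - a.1) := by
      simp only [Prod.fst_neg, Prod.snd_neg]; ring
    show (-a).2 - (-a).1 ∈ J
    rw [h]
    exact J.neg_mem ha

/-- The duplication `M ⋈ J = {(m, m') ∈ M × M : m - m' ∈ JM}` as an `(R ⋈ J)`-submodule of
`M × M`. -/
def dupModuleSub : Submodule (dupRing R J) (M × M) where
  carrier := {x | x.1 - x.2 ∈ J • (⊤ : Submodule R M)}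
  add_mem' := fun {x y} hx hy => by
    have h : (x + y).1 - (x + y).2 = (x.1 - x.2) + (y.1 - y.2) := by
      simp only [Prod.fst_add, Prod.snd_add]; abel
    show (x + y).1 - (x + y).2 ∈ J • (⊤ : Submodule R M)
    rw [h]
    exact Submodule.add_mem _ hx hy
  zero_mem' := by simp
  smul_mem' := fun a x hx => by
    have h : (a • x).1 - (a • x).2 =
        (a : R × R).1 • (x.1 - x.2) - ((a : R × R).2 - (a : R × R).1) • x.2 := by
      show (a : R × R).1 • x.1 - (a : R × R).2 • x.2 = _
      simp only [smul_sub, sub_smul]; abel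
    show (a • x).1 - (a • x).2 ∈ J • (⊤ : Submodule R M)
    rw [h]
    exact Submodule.sub_mem _ (Submodule.smul_mem _ _ hx)
      (Submodule.smul_mem_smul a.property Submodule.mem_top)

/-- The submodule `N ⋈ J = {(n, m) ∈ N × M : n - m ∈ JM}` of the `(R ⋈ J)`-module `M ⋈ J`. -/
def dupSubmodule (N : Submodule R M) : Submodule (dupRing R J) (dupModuleSub R J M) where
  carrier := {x | (x : M × M).1 ∈ N}
  add_mem' := fun {x y} hx hy => by
    show ((x + y : dupModuleSub R J M) : M × M).1 ∈ N
    rw [Submodule.coe_add, Prod.fst_add]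
    exact N.add_mem hx hy
  zero_mem' := by
    show ((0 : dupModuleSub R J M) : M × M).1 ∈ N
    simp
  smul_mem' := fun a x hx => by
    show ((a • x : dupModuleSub R J M) : M × M).1 ∈ N
    rw [SetLike.val_smul]
    exact N.smul_mem _ hx

theorem duplication_semiN (N : Submodule R M)
    (hJ : ∀ j ∈ J, j ∈ nilradical R ∧ ∀ m : M, j • m = 0) :
    (IsSemiNSubmodule R M N →
      IsSemiNSubmodule (dupRing R J) (dupModuleSub R J M) (dupSubmodule R J M N)) ∧
    (IsSemiNSubmodule (dupRing R J) (dupModuleSub R J M) (dupSubmodule R J M N) →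
      IsSemiNSubmodule R M N) := by
  -- J • ⊤ = ⊥ since J annihilates M
  have hJtop : J • (⊤ : Submodule R M) = ⊥ := by
    refine le_antisymm ?_ bot_le
    rw [Submodule.smul_le]
    intro j hj m _
    simp [(hJ j hj).2 m]
  -- elements of dupModuleSub are diagonal
  have hdiag : ∀ x : dupModuleSub R J M, (x : M × M).1 = (x : M × M).2 := by
    intro x
    have hx : (x : M × M).1 - (x : M × M).2 ∈ J • (⊤ : Submodule R M) := x.property
    rw [hJtop, Submodule.mem_bot, sub_eq_zero] at hx
    exact hx
  -- nilpotency transfer: fst nilpotent implies element nilpotent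
  have hnil : ∀ a : dupRing R J, IsNilpotent ((a : R × R).1) → IsNilpotent a := by
    rintro a ⟨n, hn⟩
    have hja : (a : R × R).2 - (a : R × R).1 ∈ J := a.property
    obtain ⟨k, hk⟩ := (hJ _ hja).1
    have h2 : (a : R × R).2 = (a : R × R).1 + ((a : R × R).2 - (a : R × R).1) := by ring
    have hsnil : IsNilpotent ((a : R × R).2) := by
      rw [h2]
      exact (Commute.all _ _).isNilpotent_add ⟨n, hn⟩ ⟨k, hk⟩
    obtain ⟨l, hl⟩ := hsnil
    refine ⟨n + l, Subtype.ext ?_⟩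
    have hcoe : ((a ^ (n + l) : dupRing R J) : R × R) = (a : R × R) ^ (n + l) := by
      push_cast; ring
    rw [hcoe]
    refine Prod.ext ?_ ?_
    · show ((a : R × R) ^ (n + l)).1 = (0 : R × R).1
      rw [Prod.pow_fst, pow_add, hn, zero_mul]; rfl
    · show ((a : R × R) ^ (n + l)).2 = (0 : R × R).2
      rw [Prod.pow_snd, pow_add, hl, mul_zero]; rfl
  have hsmul : ∀ (a : dupRing R J) (v : M × M), a • v = ((a : R × R)) • v := fun _ _ => rfl
  -- coercion of pow
  have hcoe2 : ∀ a : dupRing R J, ((a ^ 2 : dupRing R J) : R × R) = (a : R × R) ^ 2 := by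
    intro a; push_cast; ring
  constructor
  · rintro ⟨hNne, hN⟩
    constructor
    · intro htop
      apply hNne
      rw [Submodule.eq_top_iff']
      intro m
      have hmem : ((m, m) : M × M) ∈ dupModuleSub R J M := by
        show m - m ∈ J • (⊤ : Submodule R M)
        rw [sub_self]; exact Submodule.zero_mem _
      have : (⟨(m, m), hmem⟩ : dupModuleSub R J M) ∈ dupSubmodule R J M N := by
        rw [htop]; trivial
      exact this
    · intro a x hsq hna hfaith
      set r := (a : R × R).1 with hr
      set m := (x : M × M).1 with hm
      have hxm2 : (x : M × M).2 = m := (hdiag x).symm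
      -- a^2 • x has first coordinate r^2 • m
      have hsq' : r ^ 2 • m ∈ N := by
        have : (((a ^ 2 • x : dupModuleSub R J M) : M × M)).1 ∈ N := hsq
        rw [SetLike.val_smul, hsmul, prod_smul_def] at this
        rw [hcoe2, Prod.pow_fst] at this
        exact this
      have hrnil : ¬ IsNilpotent r := fun h => hna (hnil a h)
      have hfaith' : ∀ s : R, s • m = 0 → s = 0 := by
        intro s hs
        have hbmem : ((s, s) : R × R) ∈ dupRing R J := by
          show s - s ∈ J
          rw [sub_self]; exact J.zero_mem
        have hb0 : (⟨(s, s), hbmem⟩ : dupRing R J) • x = 0 := by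
          refine Subtype.ext ?_
          rw [SetLike.val_smul, hsmul, prod_smul_def]
          show ((s • (x : M × M).1, s • (x : M × M).2) : M × M) = ((0 : dupModuleSub R J M) : M × M)
          rw [hxm2, ← hm, hs]
          rfl
        have := hfaith _ hb0
        have : ((⟨(s, s), hbmem⟩ : dupRing R J) : R × R) = ((0 : dupRing R J) : R × R) := by
          rw [this]
        exact congrArg Prod.fst this
      have := hN r m hsq' hrnil hfaith'
      show (((a • x : dupModuleSub R J M) : M × M)).1 ∈ N
      rw [SetLike.val_smul, hsmul, prod_smul_def]
      exact this
  · rintro ⟨hDne, hD⟩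
    constructor
    · intro htop
      apply hDne
      rw [Submodule.eq_top_iff']
      intro x
      show ((x : dupModuleSub R J M) : M × M).1 ∈ N
      rw [htop]; trivial
    · intro r m hsq hrn hfaith
      have hamem : ((r, r) : R × R) ∈ dupRing R J := by
        show r - r ∈ J
        rw [sub_self]; exact J.zero_mem
      set a : dupRing R J := ⟨(r, r), hamem⟩ with ha
      have hxmem : ((m, m) : M × M) ∈ dupModuleSub R J M := by
        show m - m ∈ J • (⊤ : Submodule R M)
        rw [sub_self]; exact Submodule.zero_mem _
      set x : dupModuleSub R J M := ⟨(m, m), hxmem⟩ with hx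
      have h1 : a ^ 2 • x ∈ dupSubmodule R J M N := by
        show (((a ^ 2 • x : dupModuleSub R J M) : M × M)).1 ∈ N
        rw [SetLike.val_smul, hsmul, prod_smul_def]
        show ((a : R × R) ^ 2).1 • (x : M × M).1 ∈ N
        rw [Prod.pow_fst]
        exact hsq
      have h2 : ¬ IsNilpotent a := by
        rintro ⟨n, hn⟩
        apply hrn
        refine ⟨n, ?_⟩
        have : ((a ^ n : dupRing R J) : R × R) = ((0 : dupRing R J) : R × R) := by rw [hn]
        have hcoen : ((a ^ n : dupRing R J) : R × R) = (a : R × R) ^ n := by push_cast; ring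
        rw [hcoen] at this
        have := congrArg Prod.fst this
        rw [Prod.pow_fst] at this
        exact this
      have h3 : ∀ b : dupRing R J, b • x = 0 → b = 0 := by
        intro b hb
        have hb' : ((b • x : dupModuleSub R J M) : M × M) = ((0 : dupModuleSub R J M) : M × M) := by
          rw [hb]
        rw [SetLike.val_smul, hsmul, prod_smul_def] at hb'
        have h1' := congrArg Prod.fst hb'
        have h2' := congrArg Prod.snd hb'
        simp only at h1' h2'
        have hbfst : (b : R × R).1 = 0 := hfaith _ h1'
        have hbsnd : (b : R × R).2 = 0 := hfaith _ h2'
        exact Subtype.ext (Prod.ext hbfst hbsnd)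
      have := hD a x h1 h2 h3
      have : (((a • x : dupModuleSub R J M) : M × M)).1 ∈ N := this
      rw [SetLike.val_smul, hsmul, prod_smul_def] at this
      exact this
end
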